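/- For every a ∈ ℝ and every k ∈ ℕ, ∫_ℝ |h_k(y − i·a)|² dy = ∫_ℝ h_k(y)²·e^{−2ay} dy. -/

import Mathlib

open MeasureTheory

/-- The creation (raising) operator `f ↦ z f - f'` on functions of a complex variable. -/
noncomputable def raiseOp (f : ℂ → ℂ) : ℂ → ℂ := fun z => z * f z - deriv f z

/-- The Hermite function `h_k(z) = (2^k k! √π)^{-1/2} (z - d/dz)^k e^{-z²/2}`,
as an entire function of a complex variable. -/
noncomputable def hermiteFun (k : ℕ) (z : ℂ) : ℂ :=
  ((Real.sqrt ((2 : ℝ) ^ k * (k.factorial : ℝ) * Real.sqrt Real.pi) : ℝ) : ℂ)⁻¹ *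
    (raiseOp^[k] fun w => Complex.exp (-(w ^ 2) / 2)) z

/-!
Write `H_k` for the physicists' Hermite polynomials, so that `h_k(z) = c_k H_k(z) e^{-z²/2}`
with `c_k` real. Since `H_k` has real coefficients, `|h_k(z)|² = h_k(z) h_k(z̄)`, and after
translating the right-hand integral by `a` both sides become
`c_k² e^{a²} ∫ H_k(y + u) H_k(y + v) e^{-y²} dy`, with `(u, v) = (-ia, ia)` on the left and
`(u, v) = (-a, -a)` on the right.

Conjugating the raising operator `2X - d/dX` by the shift `X ↦ X + u` adds `2u`, which gives
the addition formula `H_k(X + u) = ∑ⱼ C(k, j) (2u)^{k-j} H_j`. The raising operator is adjoint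
to `d/dX` for the Gaussian weight, so the `H_j` are orthogonal, and the integral above equals
`∑ⱼ C(k, j)² (4uv)^{k-j} ∫ H_j² e^{-y²}`: it depends on `uv` only, and
`(-ia)(ia) = a² = (-a)(-a)`.
-/
open Polynomial Finset Complex ComplexConjugate

section PhysHermite

variable (R : Type*) [CommRing R]

noncomputable def physRaise : Module.End R R[X] := 2 • LinearMap.mulLeft R X - derivative

noncomputable def physHermite (n : ℕ) : R[X] := (physRaise R ^ n) 1

variable {R}

lemma physRaise_apply (p : R[X]) : physRaise R p = 2 * X * p - derivative p := by
  simp [physRaise, two_mul, add_mul]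

lemma physHermite_succ (n : ℕ) :
    physHermite R (n + 1) = 2 * X * physHermite R n - derivative (physHermite R n) := by
  rw [physHermite, pow_succ', Module.End.mul_apply, physRaise_apply, physHermite]

lemma natDegree_physHermite_le (n : ℕ) : (physHermite R n).natDegree ≤ n := by
  induction n with
  | zero => simp [physHermite]
  | succ n ih =>
    rw [physHermite_succ]
    refine (natDegree_sub_le _ _).trans (max_le ?_ ?_)
    · have : (2 * X : R[X]).natDegree ≤ 1 := natDegree_mul_le.trans (by simp [natDegree_X_le])
      have := natDegree_mul_le (p := 2 * X) (q := physHermite R n)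
      omega
    · have := natDegree_derivative_le (physHermite R n)
      omega

lemma map_physHermite {S : Type*} [CommRing S] (f : R →+* S) (n : ℕ) :
    (physHermite R n).map f = physHermite S n := by
  induction n with
  | zero => simp [physHermite]
  | succ n ih => simp [physHermite_succ, Polynomial.map_sub, ← derivative_map, ih]

lemma semiconjBy_taylor_physRaise (u : R) :
    SemiconjBy (taylor u) (physRaise R) (physRaise R + algebraMap R _ (2 * u)) := by
  refine LinearMap.ext fun p => ?_
  simp only [Module.End.mul_apply, LinearMap.add_apply, physRaise_apply,
    Module.algebraMap_end_apply, taylor_apply, sub_comp, mul_comp, X_comp, derivative_comp,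
    derivative_add, derivative_X, derivative_C, add_zero, smul_eq_C_mul, ofNat_comp, C_mul,
    map_ofNat]
  ring

lemma taylor_physHermite (u : R) (k : ℕ) :
    taylor u (physHermite R k) =
      ∑ j ∈ range (k + 1), ((k.choose j : R) * (2 * u) ^ (k - j)) • physHermite R j := by
  have hcomm : Commute (physRaise R) (algebraMap R _ (2 * u)) := (Algebra.commutes _ _).symm
  rw [physHermite, ← Module.End.mul_apply, ((semiconjBy_taylor_physRaise u).pow_right k).eq,
    Module.End.mul_apply, taylor_one, C_1, hcomm.add_pow, LinearMap.sum_apply]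
  refine sum_congr rfl fun j _ => ?_
  rw [← map_pow, ← map_natCast (algebraMap R (Module.End R R[X])), mul_assoc, ← map_mul,
    Module.End.mul_apply, Module.algebraMap_end_apply, map_smul, mul_comm, physHermite]

end PhysHermite

section Gaussian

lemma integrable_eval_mul_cexp_neg_sq (p : ℂ[X]) :
    Integrable fun y : ℝ => eval (y : ℂ) p * cexp (-(y : ℂ) ^ 2) := by
  induction p using Polynomial.induction_on' with
  | add p q hp hq =>
    simp only [eval_add, add_mul]
    exact hp.add hq
  | monomial n c =>
    have h := ((integrable_rpow_mul_exp_neg_mul_sq one_pos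
      (s := n) (by linarith [n.cast_nonneg (α := ℝ)])).ofReal (𝕜 := ℂ)).const_mul c
    refine h.congr (ae_of_all _ fun y => ?_)
    simp [Real.rpow_natCast, ofReal_exp, mul_assoc]

noncomputable def gaussIntegral : ℂ[X] →ₗ[ℂ] ℂ where
  toFun p := ∫ y : ℝ, eval (y : ℂ) p * cexp (-(y : ℂ) ^ 2)
  map_add' p q := by
    simp only [eval_add, add_mul]
    exact integral_add (integrable_eval_mul_cexp_neg_sq p) (integrable_eval_mul_cexp_neg_sq q)
  map_smul' c p := by
    simp only [eval_smul, smul_eq_mul, mul_assoc, RingHom.id_apply]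
    exact integral_const_mul c _

lemma gaussIntegral_apply (p : ℂ[X]) :
    gaussIntegral p = ∫ y : ℝ, eval (y : ℂ) p * cexp (-(y : ℂ) ^ 2) := rfl

lemma gaussIntegral_physRaise (p : ℂ[X]) : gaussIntegral (physRaise ℂ p) = 0 := by
  have hderiv (y : ℝ) : HasDerivAt (fun y : ℝ => -(eval (y : ℂ) p * cexp (-(y : ℂ) ^ 2)))
      (eval (y : ℂ) (physRaise ℂ p) * cexp (-(y : ℂ) ^ 2)) y := by
    have hexp :
        HasDerivAt (fun z : ℂ => cexp (-z ^ 2)) (cexp (-(y : ℂ) ^ 2) * (-(2 * y))) y := by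
      simpa using ((hasDerivAt_pow 2 (y : ℂ)).neg).cexp
    refine (((p.hasDerivAt (y : ℂ)).mul hexp).neg.comp_ofReal).congr_deriv ?_
    simp only [physRaise_apply, eval_sub, eval_mul, eval_ofNat, eval_X]
    ring
  exact integral_eq_zero_of_hasDerivAt_of_integrable hderiv
    (integrable_eval_mul_cexp_neg_sq _) (integrable_eval_mul_cexp_neg_sq p).neg

lemma gaussIntegral_physRaise_mul (p q : ℂ[X]) :
    gaussIntegral (physRaise ℂ p * q) = gaussIntegral (p * derivative q) := by
  have h : physRaise ℂ p * q = physRaise ℂ (p * q) + p * derivative q := by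
    simp only [physRaise_apply, derivative_mul]
    ring
  rw [h, map_add, gaussIntegral_physRaise, zero_add]

lemma gaussIntegral_physRaise_pow_mul (n : ℕ) (p q : ℂ[X]) :
    gaussIntegral ((physRaise ℂ ^ n) p * q) = gaussIntegral (p * derivative^[n] q) := by
  induction n generalizing p with
  | zero => rfl
  | succ n ih =>
    rw [pow_succ, Module.End.mul_apply, ih, gaussIntegral_physRaise_mul,
      Function.iterate_succ_apply']

lemma gaussIntegral_physHermite_mul_eq_zero {n : ℕ} {q : ℂ[X]} (hq : q.natDegree < n) :
    gaussIntegral (physHermite ℂ n * q) = 0 := by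
  rw [physHermite, gaussIntegral_physRaise_pow_mul, iterate_derivative_eq_zero hq, mul_zero,
    map_zero]

lemma gaussIntegral_physHermite_mul_physHermite {j l : ℕ} (h : j ≠ l) :
    gaussIntegral (physHermite ℂ j * physHermite ℂ l) = 0 := by
  rcases h.lt_or_gt with h | h
  · rw [mul_comm]
    exact gaussIntegral_physHermite_mul_eq_zero ((natDegree_physHermite_le j).trans_lt h)
  · exact gaussIntegral_physHermite_mul_eq_zero ((natDegree_physHermite_le l).trans_lt h)

lemma gaussIntegral_taylor_mul_taylor_physHermite (k : ℕ) (u v : ℂ) :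
    gaussIntegral (taylor u (physHermite ℂ k) * taylor v (physHermite ℂ k)) =
      ∑ j ∈ range (k + 1), ((k.choose j : ℂ) ^ 2 * (4 * (u * v)) ^ (k - j)) *
        gaussIntegral (physHermite ℂ j * physHermite ℂ j) := by
  rw [taylor_physHermite, taylor_physHermite, sum_mul_sum, map_sum]
  refine sum_congr rfl fun j hj => ?_
  rw [map_sum, sum_eq_single_of_mem j hj fun l _ hl => by
    rw [smul_mul_smul_comm, map_smul, gaussIntegral_physHermite_mul_physHermite hl.symm,
      smul_zero]]
  rw [smul_mul_smul_comm, map_smul, smul_eq_mul, show 4 * (u * v) = 2 * u * (2 * v) by ring,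
    mul_pow (2 * u)]
  ring

end Gaussian

section HermiteFun

lemma iterate_raiseOp_gaussian (k : ℕ) :
    (raiseOp^[k] fun w => cexp (-(w ^ 2) / 2)) =
      fun z => eval z (physHermite ℂ k) * cexp (-(z ^ 2) / 2) := by
  induction k with
  | zero => simp [physHermite]
  | succ k ih =>
    funext z
    have hexponent : HasDerivAt (fun z : ℂ => -(z ^ 2) / 2) (-z) z := by
      simpa [neg_div] using ((hasDerivAt_pow 2 z).neg).div_const 2
    have hprod : HasDerivAt (fun z => eval z (physHermite ℂ k) * cexp (-(z ^ 2) / 2))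
        (eval z (derivative (physHermite ℂ k)) * cexp (-(z ^ 2) / 2) +
          eval z (physHermite ℂ k) * (cexp (-(z ^ 2) / 2) * (-z))) z :=
      ((physHermite ℂ k).hasDerivAt z).mul hexponent.cexp
    rw [Function.iterate_succ_apply', ih, raiseOp, hprod.deriv, physHermite_succ]
    simp only [eval_sub, eval_mul, eval_ofNat, eval_X]
    ring

noncomputable def hermiteCoeff (k : ℕ) : ℝ :=
  (Real.sqrt ((2 : ℝ) ^ k * (k.factorial : ℝ) * Real.sqrt Real.pi))⁻¹

lemma hermiteFun_eq (k : ℕ) (z : ℂ) :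
    hermiteFun k z = hermiteCoeff k * (eval z (physHermite ℂ k) * cexp (-(z ^ 2) / 2)) := by
  rw [hermiteFun, iterate_raiseOp_gaussian, hermiteCoeff, ofReal_inv]

lemma hermiteFun_conj (k : ℕ) (z : ℂ) : hermiteFun k (conj z) = conj (hermiteFun k z) := by
  rw [hermiteFun_eq, hermiteFun_eq, map_mul, map_mul, conj_ofReal, ← exp_conj, map_div₀,
    map_neg, map_pow, map_ofNat, ← eval₂_at_apply, ← eval_map, map_physHermite]

lemma ofReal_norm_sq_hermiteFun (k : ℕ) (z : ℂ) :
    ((‖hermiteFun k z‖ ^ 2 : ℝ) : ℂ) =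
      hermiteCoeff k ^ 2 * (eval z (physHermite ℂ k) * eval (conj z) (physHermite ℂ k)) *
        cexp (-(z ^ 2 + conj z ^ 2) / 2) := by
  rw [ofReal_pow, ← mul_conj', ← hermiteFun_conj, hermiteFun_eq, hermiteFun_eq,
    show -(z ^ 2 + conj z ^ 2) / 2 = -(z ^ 2) / 2 + -(conj z ^ 2) / 2 by ring, exp_add]
  ring

end HermiteFun

lemma ofReal_norm_sq_hermiteFun_sub_mul_I (k : ℕ) (a y : ℝ) :
    ((‖hermiteFun k (y - a * I)‖ ^ 2 : ℝ) : ℂ) = hermiteCoeff k ^ 2 * cexp (a ^ 2) *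
      (eval (y : ℂ) (taylor (-(a * I)) (physHermite ℂ k) * taylor (a * I) (physHermite ℂ k)) *
        cexp (-(y : ℂ) ^ 2)) := by
  have hexponent :
      -(((y : ℂ) - a * I) ^ 2 + ((y : ℂ) + a * I) ^ 2) / 2 = a ^ 2 + -(y : ℂ) ^ 2 := by
    linear_combination (-(a : ℂ) ^ 2) * I_sq
  rw [ofReal_norm_sq_hermiteFun, map_sub, map_mul, conj_ofReal, conj_ofReal, conj_I, mul_neg,
    sub_neg_eq_add, hexponent, exp_add, eval_mul, taylor_eval, taylor_eval, ← sub_eq_add_neg]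
  ring

lemma ofReal_norm_sq_hermiteFun_sub_mul_exp (k : ℕ) (a y : ℝ) :
    ((‖hermiteFun k ((y - a : ℝ) : ℂ)‖ ^ 2 * Real.exp (-2 * a * (y - a)) : ℝ) : ℂ) =
      hermiteCoeff k ^ 2 * cexp (a ^ 2) *
        (eval (y : ℂ)
            (taylor (-(a : ℂ)) (physHermite ℂ k) * taylor (-(a : ℂ)) (physHermite ℂ k)) *
          cexp (-(y : ℂ) ^ 2)) := by
  have hexponent : -(((y - a : ℝ) : ℂ) ^ 2 + ((y - a : ℝ) : ℂ) ^ 2) / 2 +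
      ((-2 * a * (y - a) : ℝ) : ℂ) = a ^ 2 + -(y : ℂ) ^ 2 := by
    push_cast
    ring
  rw [ofReal_mul, ofReal_norm_sq_hermiteFun, conj_ofReal, ofReal_exp, mul_assoc _ (cexp _),
    ← exp_add, hexponent, exp_add, eval_mul, taylor_eval, ← sub_eq_add_neg, ofReal_sub]
  ring

/-- `∫ |h_k(y - i a)|² dy = ∫ h_k(y)² e^{-2 a y} dy`  (here `h_k(y)` is real for real `y`,
so `h_k(y)² = ‖h_k(y)‖²`). -/
theorem hermite_shift_norm_eq_weighted (a : ℝ) (k : ℕ) :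
    (∫ y : ℝ, ‖hermiteFun k ((y : ℂ) - (a : ℂ) * Complex.I)‖ ^ 2) =
      ∫ y : ℝ, ‖hermiteFun k (y : ℂ)‖ ^ 2 * Real.exp (-2 * a * y) := by
  apply ofReal_injective
  conv_rhs => rw [← integral_sub_right_eq_self _ a]
  rw [← integral_complex_ofReal, ← integral_complex_ofReal]
  simp only [ofReal_norm_sq_hermiteFun_sub_mul_I, ofReal_norm_sq_hermiteFun_sub_mul_exp,
    integral_const_mul, ← gaussIntegral_apply, gaussIntegral_taylor_mul_taylor_physHermite]
  have hproduct : -((a : ℂ) * I) * (a * I) = -(a : ℂ) * -a := by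
    linear_combination (-(a : ℂ) ^ 2) * I_sq
  rw [hproduct]
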